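/- Let A be a nonzero ideal of 𝒪_K with S-normal presentation (a, α). Let γ = 1/α in K, let g be the positive generator of the ideal α𝒪_K ∩ ℤ of ℤ, and write g = g₁g₂ with g₁ and g₂ coprime positive integers such that every prime divisor of g₁ lies in S and no prime divisor of g₂ lies in S. Then the inverse fractional ideal satisfies A⁻¹ = 𝒪_K + g₂γ𝒪_K, i.e. A⁻¹ is the fractional ideal generated by 1 and g₂γ. -/

import Mathlib

open NumberField
open scoped nonZeroDivisors

variable {K : Type*} [Field K] [NumberField K]

/-- `vQ Q A` is the multiplicity of the prime ideal `Q` in the factorization of the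
ideal `A` of the ring of integers. -/
noncomputable def vQ (Q A : Ideal (𝓞 K)) : ℕ :=
  letI := Classical.decEq (Ideal (𝓞 K))
  Multiset.count Q (UniqueFactorizationMonoid.normalizedFactors A)

/-- `(a, α)` is an `S`-normal presentation of the nonzero ideal `A` of `𝓞 K`:
`a` is a positive integer in `A ∩ ℤ`, `α ∈ A`, for every nonzero prime ideal `Q` lying over a
rational prime `p ∉ S` we have `v_Q(a) = v_Q(A) = 0`, and for every nonzero prime ideal `Q`
lying over a rational prime `p ∈ S` we have `v_Q(α) = v_Q(A)`. -/
def IsSNormalPresentation (S : Finset ℕ) (A : Ideal (𝓞 K)) (a : ℕ) (α : 𝓞 K) : Prop :=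
  0 < a ∧ (a : 𝓞 K) ∈ A ∧ α ∈ A ∧
    (∀ Q : Ideal (𝓞 K), Q.IsPrime → Q ≠ ⊥ →
      ∀ p : ℕ, p.Prime → (p : 𝓞 K) ∈ Q → p ∉ S →
        vQ Q (Ideal.span {(a : 𝓞 K)}) = 0 ∧ vQ Q A = 0) ∧
    (∀ Q : Ideal (𝓞 K), Q.IsPrime → Q ≠ ⊥ →
      ∀ p : ℕ, p.Prime → (p : 𝓞 K) ∈ Q → p ∈ S →
        vQ Q (Ideal.span {α}) = vQ Q A)

/-!
Multiplying by `α`, the claim `A⁻¹ = 𝒪_K + g₂α⁻¹𝒪_K` becomes `A · (α, g₂) = (α)`, which is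
checked one prime `Q` above `p` at a time. If `p ∈ S`, then `Q ∤ g₂` and `v_Q(A) = v_Q(α)`.
If `p ∉ S`, then `v_Q(A) = 0`, and `v_Q(α) ≤ v_Q(g₁g₂) = v_Q(g₂)` because `g₁g₂ ∈ α𝒪_K`
and `Q ∤ g₁`.
-/

open UniqueFactorizationMonoid Multiset

namespace Ideal

section Dedekind

variable {R : Type*} [CommRing R] [IsDedekindDomain R]

theorem count_normalizedFactors_sup {I J : Ideal R} (hI : I ≠ ⊥) (hJ : J ≠ ⊥) (Q : Ideal R) :
    count Q (normalizedFactors (I ⊔ J)) =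
      min (count Q (normalizedFactors I)) (count Q (normalizedFactors J)) := by
  rw [sup_eq_prod_inf_factors hI hJ, normalizedFactors_prod_inter_eq_inter, count_inter]

theorem count_normalizedFactors_eq_zero_iff {Q I : Ideal R} (hQ : Q.IsPrime) (hI : I ≠ ⊥) :
    count Q (normalizedFactors I) = 0 ↔ ¬ I ≤ Q := by
  rw [count_eq_zero, mem_normalizedFactors_iff hI]
  exact and_iff_right hQ |>.not

theorem eq_of_forall_count_normalizedFactors_eq {I J : Ideal R} (hI : I ≠ ⊥) (hJ : J ≠ ⊥)
    (h : ∀ Q : Ideal R, Q.IsPrime → Q ≠ ⊥ →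
      count Q (normalizedFactors I) = count Q (normalizedFactors J)) :
    I = J := by
  refine associated_iff_eq.mp <|
    (associated_iff_normalizedFactors_eq_normalizedFactors hI hJ).mpr <| Multiset.ext.mpr fun Q ↦ ?_
  by_cases hQ : Prime Q
  · exact h Q (isPrime_of_prime hQ) hQ.ne_zero
  · rw [count_eq_zero_of_notMem, count_eq_zero_of_notMem] <;>
      exact fun hmem ↦ hQ (prime_of_normalized_factor Q hmem)

theorem mul_sup_eq_of_forall_count {A I J : Ideal R} (hA : A ≠ ⊥) (hI : I ≠ ⊥) (hJ : J ≠ ⊥)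
    (h : ∀ Q : Ideal R, Q.IsPrime → Q ≠ ⊥ →
      (count Q (normalizedFactors J) = 0 ∧
          count Q (normalizedFactors A) = count Q (normalizedFactors I)) ∨
        (count Q (normalizedFactors A) = 0 ∧
          count Q (normalizedFactors I) ≤ count Q (normalizedFactors J))) :
    A * (I ⊔ J) = I := by
  have hIJ : I ⊔ J ≠ ⊥ := ne_bot_of_le_ne_bot hI le_sup_left
  refine eq_of_forall_count_normalizedFactors_eq (mul_ne_zero hA hIJ) hI fun Q hQ hQ0 ↦ ?_
  rw [normalizedFactors_mul hA hIJ, count_add, count_normalizedFactors_sup hI hJ]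
  rcases h Q hQ hQ0 with ⟨hJQ, hAQ⟩ | ⟨hAQ, hIQ⟩ <;> omega

end Dedekind

theorem exists_prime_natCast_mem_iff {R : Type*} [CommRing R] (Q : Ideal R) [Q.IsPrime]
    [Finite (R ⧸ Q)] : ∃ p : ℕ, p.Prime ∧ ∀ n : ℕ, (n : R) ∈ Q ↔ p ∣ n := by
  have : NeZero (ringChar (R ⧸ Q)) := ⟨CharP.char_ne_zero_of_finite (R ⧸ Q) _⟩
  refine ⟨ringChar (R ⧸ Q), (CharP.char_is_prime_of_pos (R ⧸ Q) _).out, fun n ↦ ?_⟩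
  rw [← Quotient.eq_zero_iff_mem, map_natCast, ringChar.spec]

end Ideal

namespace FractionalIdeal

variable {R : Type*} [CommRing R] [IsDedekindDomain R] {F : Type*} [Field F] [Algebra R F]
  [IsFractionRing R F]

theorem inv_eq_one_add_spanSingleton_of_mul_sup_eq {A : Ideal R} {α b : R}
    (hα : α ≠ 0) (h : A * (Ideal.span {α} ⊔ Ideal.span {b}) = Ideal.span {α}) :
    (A : FractionalIdeal R⁰ F)⁻¹ =
      1 + spanSingleton R⁰ (algebraMap R F b * (algebraMap R F α)⁻¹) := by
  have hα' : algebraMap R F α ≠ 0 := IsFractionRing.to_map_ne_zero_of_mem_nonZeroDivisors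
    (mem_nonZeroDivisors_of_ne_zero hα)
  have hsum : (1 + spanSingleton R⁰ (algebraMap R F b * (algebraMap R F α)⁻¹)) *
      spanSingleton R⁰ (algebraMap R F α) = (Ideal.span {α} ⊔ Ideal.span {b} : Ideal R) := by
    rw [add_mul, one_mul, spanSingleton_mul_spanSingleton, inv_mul_cancel_right₀ hα',
      coeIdeal_sup, coeIdeal_span_singleton, coeIdeal_span_singleton]
  refine inv_eq_of_mul_eq_one_right <| mul_right_cancel₀ (spanSingleton_ne_zero_iff.mpr hα') ?_
  rw [mul_assoc, hsum, ← coeIdeal_mul, h, coeIdeal_span_singleton, one_mul]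

end FractionalIdeal

theorem vQ_eq_count (Q A : Ideal (𝓞 K)) :
    vQ Q A = count Q (normalizedFactors A) := by
  unfold vQ
  congr 1

theorem IsSNormalPresentation.mul_sup_eq {S : Finset ℕ} {A : Ideal (𝓞 K)} {a : ℕ} {α : 𝓞 K}
    (hpres : IsSNormalPresentation S A a α) (hA : A ≠ ⊥) (hα : α ≠ 0) {g₁ g₂ : ℕ}
    (hg₁ : 0 < g₁) (hg₂ : 0 < g₂) (hmem : ((g₁ * g₂ : ℕ) : 𝓞 K) ∈ Ideal.span {α})
    (hg₁S : ∀ p : ℕ, p.Prime → p ∣ g₁ → p ∈ S) (hg₂S : ∀ p : ℕ, p.Prime → p ∣ g₂ → p ∉ S) :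
    A * (Ideal.span {α} ⊔ Ideal.span {(g₂ : 𝓞 K)}) = Ideal.span {α} := by
  obtain ⟨-, -, -, hout, hin⟩ := hpres
  have hspan {n : ℕ} (hn : 0 < n) : Ideal.span {(n : 𝓞 K)} ≠ ⊥ := by
    simpa [Ideal.span_singleton_eq_bot] using hn.ne'
  refine Ideal.mul_sup_eq_of_forall_count hA (by simpa [Ideal.span_singleton_eq_bot] using hα)
    (hspan hg₂) fun Q hQ hQ0 ↦ ?_
  have : Q.IsMaximal := hQ.isMaximal hQ0
  obtain ⟨p, hp, hQp⟩ := Ideal.exists_prime_natCast_mem_iff Q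
  have hQn {n : ℕ} (hn : 0 < n) :
      count Q (normalizedFactors (Ideal.span {(n : 𝓞 K)})) = 0 ↔ ¬ p ∣ n := by
    rw [Ideal.count_normalizedFactors_eq_zero_iff hQ (hspan hn), Ideal.span_singleton_le_iff_mem,
      hQp]
  have hpQ : (p : 𝓞 K) ∈ Q := (hQp p).mpr dvd_rfl
  by_cases hpS : p ∈ S
  · refine .inl ⟨(hQn hg₂).mpr fun hdvd ↦ hg₂S p hp hdvd hpS, ?_⟩
    simpa only [vQ_eq_count] using (hin Q hQ hQ0 p hp hpQ hpS).symm
  · refine .inr ⟨by simpa only [vQ_eq_count] using (hout Q hQ hQ0 p hp hpQ hpS).2, ?_⟩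
    have hg₁Q := (hQn hg₁).mpr fun hdvd ↦ hpS (hg₁S p hp hdvd)
    calc count Q (normalizedFactors (Ideal.span {α}))
        ≤ count Q (normalizedFactors (Ideal.span {((g₁ * g₂ : ℕ) : 𝓞 K)})) :=
          Ideal.count_le_of_ideal_ge ((Ideal.span_singleton_le_iff_mem _).mpr hmem)
            (hspan (mul_pos hg₁ hg₂)) Q
      _ = count Q (normalizedFactors (Ideal.span {(g₂ : 𝓞 K)})) := by
          rw [Nat.cast_mul, ← Ideal.span_singleton_mul_span_singleton,
            normalizedFactors_mul (hspan hg₁) (hspan hg₂), count_add, hg₁Q, zero_add]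

theorem sNormalPresentation_inv_general
    (K : Type*) [Field K] [NumberField K]
    (S : Finset ℕ)
    (A : Ideal (𝓞 K)) (hA : A ≠ ⊥)
    (a : ℕ) (α : 𝓞 K) (hα : α ≠ 0)
    (hpres : IsSNormalPresentation S A a α)
    (g g₁ g₂ : ℕ)
    (hgen : (Ideal.span {α}).comap (algebraMap ℤ (𝓞 K)) = Ideal.span {(g : ℤ)})
    (hsplit : g = g₁ * g₂) (hg₁ : 0 < g₁) (hg₂ : 0 < g₂)
    (hg₁S : ∀ p : ℕ, p.Prime → p ∣ g₁ → p ∈ S)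
    (hg₂S : ∀ p : ℕ, p.Prime → p ∣ g₂ → p ∉ S) :
    (A : FractionalIdeal (𝓞 K)⁰ K)⁻¹ =
      1 + FractionalIdeal.spanSingleton (𝓞 K)⁰
        ((g₂ : K) * (algebraMap (𝓞 K) K α)⁻¹) := by
  have hmem : ((g₁ * g₂ : ℕ) : 𝓞 K) ∈ Ideal.span {α} := by
    have hg : (g : ℤ) ∈ (Ideal.span {α}).comap (algebraMap ℤ (𝓞 K)) :=
      hgen ▸ Ideal.mem_span_singleton_self _
    simpa [hsplit] using hg
  rw [← map_natCast (algebraMap (𝓞 K) K)]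
  exact FractionalIdeal.inv_eq_one_add_spanSingleton_of_mul_sup_eq hα
    (hpres.mul_sup_eq hA hα hg₁ hg₂ hmem hg₁S hg₂S)

/-- Inversion for `S`-normal presentations: if `A` has `S`-normal presentation `(a, α)`,
`γ = 1/α`, `g > 0` generates `α𝒪_K ∩ ℤ`, and `g = g₁g₂` with `g₁, g₂` coprime, all prime
divisors of `g₁` in `S` and no prime divisor of `g₂` in `S`, then the inverse fractional
ideal `A⁻¹` is generated by `1` and `g₂γ`. -/
theorem sNormalPresentation_inv
    (K : Type*) [Field K] [NumberField K]
    (S : Finset ℕ) (hS : ∀ p ∈ S, p.Prime)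
    (A : Ideal (𝓞 K)) (hA : A ≠ ⊥)
    (a : ℕ) (α : 𝓞 K) (hα : α ≠ 0)
    (hpres : IsSNormalPresentation S A a α)
    (g g₁ g₂ : ℕ) (hg : 0 < g)
    (hgen : (Ideal.span {α}).comap (algebraMap ℤ (𝓞 K)) = Ideal.span {(g : ℤ)})
    (hsplit : g = g₁ * g₂) (hg₁ : 0 < g₁) (hg₂ : 0 < g₂)
    (hcop : Nat.Coprime g₁ g₂)
    (hg₁S : ∀ p : ℕ, p.Prime → p ∣ g₁ → p ∈ S)
    (hg₂S : ∀ p : ℕ, p.Prime → p ∣ g₂ → p ∉ S) :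
    (A : FractionalIdeal (𝓞 K)⁰ K)⁻¹ =
      1 + FractionalIdeal.spanSingleton (𝓞 K)⁰
        ((g₂ : K) * (algebraMap (𝓞 K) K α)⁻¹) :=
  sNormalPresentation_inv_general K S A hA a α hα hpres g g₁ g₂ hgen hsplit hg₁ hg₂ hg₁S hg₂S
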